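/- arXiv:math/0505518 — 3 statements merged into one kernel-verified Lean document; each statement's English description precedes it below -/
import Mathlib

section
/- Each of the first five terms of the pentagon recurrence sequence x, y, (y+1)/x, (x+y+1)/(xy), (x+1)/y is a Laurent polynomial in x and y with nonnegative integer coefficients. -/
/-!
Laurent polynomials in two variables with coefficients in `ℕ` form the semiring
`AddMonoidAlgebra ℕ (ℤ × ℤ)`, and evaluating them at nonzero `x, y` is a semiring map. Its image
is therefore closed under `+` and `*` and contains `x^{±1}` and `y^{±1}`; each of the five terms
is built from these by sums and products, e.g. `(x + y + 1) / (x * y) = (x + y + 1) * x⁻¹ * y⁻¹`.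
-/

open MvPolynomial

section Semifield

variable {K : Type*} [Semifield K] {x y : K}

def laurentMonomial (hx : x ≠ 0) (hy : y ≠ 0) : Multiplicative (ℤ × ℤ) →* K where
  toFun p := x ^ p.toAdd.1 * y ^ p.toAdd.2
  map_one' := by simp
  map_mul' p q := by
    simp only [toAdd_mul, Prod.fst_add, Prod.snd_add, zpow_add₀ hx, zpow_add₀ hy]
    ring

noncomputable def laurentEval (hx : x ≠ 0) (hy : y ≠ 0) : AddMonoidAlgebra ℕ (ℤ × ℤ) →ₐ[ℕ] K :=
  AddMonoidAlgebra.lift ℕ K (ℤ × ℤ) (laurentMonomial hx hy)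

variable (hx : x ≠ 0) (hy : y ≠ 0)

theorem exists_sum_monomials_of_mem_range_laurentEval {r : K}
    (hr : r ∈ (laurentEval hx hy).range) :
    ∃ (s : Finset (ℤ × ℤ)) (c : ℤ × ℤ → ℕ), r = ∑ p ∈ s, (c p : K) * x ^ p.1 * y ^ p.2 := by
  obtain ⟨f, rfl⟩ := hr
  refine ⟨f.coeff.support, f.coeff, ?_⟩
  simp [laurentEval, laurentMonomial, AddMonoidAlgebra.lift_apply, Finsupp.sum, mul_assoc]

theorem zpow_mul_zpow_mem_range_laurentEval (i j : ℤ) :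
    x ^ i * y ^ j ∈ (laurentEval hx hy).range :=
  ⟨AddMonoidAlgebra.single (i, j) 1, by simp [laurentEval, laurentMonomial]⟩

theorem pentagon_terms_mem_range_laurentEval :
    ∀ r ∈ ({x, y, (y + 1) / x, (x + y + 1) / (x * y), (x + 1) / y} : Set K),
      r ∈ (laurentEval hx hy).range := by
  have mem := zpow_mul_zpow_mem_range_laurentEval hx hy
  have hx_mem : x ∈ (laurentEval hx hy).range := by simpa using mem 1 0
  have hy_mem : y ∈ (laurentEval hx hy).range := by simpa using mem 0 1
  have hx_inv_mem : x⁻¹ ∈ (laurentEval hx hy).range := by simpa using mem (-1) 0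
  have hy_inv_mem : y⁻¹ ∈ (laurentEval hx hy).range := by simpa using mem 0 (-1)
  rintro r (rfl | rfl | rfl | rfl | rfl)
  · exact hx_mem
  · exact hy_mem
  · exact div_eq_mul_inv (y + 1) x ▸ mul_mem (add_mem hy_mem (one_mem _)) hx_inv_mem
  · rw [div_eq_mul_inv, mul_inv]
    exact mul_mem (add_mem (add_mem hx_mem hy_mem) (one_mem _)) (mul_mem hx_inv_mem hy_inv_mem)
  · exact div_eq_mul_inv (x + 1) y ▸ mul_mem (add_mem hx_mem (one_mem _)) hy_inv_mem

end Semifield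

/-- Each of the first five terms of the pentagon recurrence,
`x, y, (y+1)/x, (x+y+1)/(xy), (x+1)/y`, is a Laurent polynomial in `x` and `y`
with nonnegative integer coefficients. -/
theorem pentagon_terms_are_nonneg_laurent
    (x y : FractionRing (MvPolynomial (Fin 2) ℚ))
    (hx : x = algebraMap (MvPolynomial (Fin 2) ℚ) (FractionRing (MvPolynomial (Fin 2) ℚ)) (X 0))
    (hy : y = algebraMap (MvPolynomial (Fin 2) ℚ) (FractionRing (MvPolynomial (Fin 2) ℚ)) (X 1)) :
    ∀ r ∈ ({x, y, (y + 1) / x, (x + y + 1) / (x * y), (x + 1) / y} :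
        Set (FractionRing (MvPolynomial (Fin 2) ℚ))),
      ∃ (s : Finset (ℤ × ℤ)) (c : ℤ × ℤ → ℕ),
        r = ∑ p ∈ s, (c p : FractionRing (MvPolynomial (Fin 2) ℚ)) * x ^ p.1 * y ^ p.2 := by
  have X_ne_zero (i : Fin 2) :
      algebraMap (MvPolynomial (Fin 2) ℚ) (FractionRing (MvPolynomial (Fin 2) ℚ)) (X i) ≠ 0 :=
    (map_ne_zero_iff _ (IsFractionRing.injective _ _)).mpr (X_ne_zero i)
  have hx0 : x ≠ 0 := hx ▸ X_ne_zero 0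
  have hy0 : y ≠ 0 := hy ▸ X_ne_zero 1
  intro r hr
  exact exists_sum_monomials_of_mem_range_laurentEval hx0 hy0
    (pentagon_terms_mem_range_laurentEval hx0 hy0 r hr)
end

section
/- The maps τ₁ : (f,g) ↦ ((g+1)/f, g) and τ₂ : (f,g) ↦ (f, (f+1)/g) on pairs of nonzero rational functions are involutions, and the composition τ₂ ∘ τ₁ has order 5, so the group generated by τ₁ and τ₂ is a dihedral group with 10 elements. -/
open MvPolynomial

/-!
Pulled back along `τ₂ ∘ τ₁`, the coordinates `x, y` become the terms `a₃, a₄` of the Lyness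
recurrence `a₀ = x`, `a₁ = y`, `aₙ₊₂ = (aₙ₊₁ + 1) / aₙ`. Being a field automorphism, `τ₂τ₁`
then shifts the whole sequence by three places. The sequence has period 5, so `(τ₂τ₁)⁵` fixes
the generators `x, y` and is the identity.

In any group, the subgroup generated by two involutions `a, b` is `⟨ba⟩ ∪ a⟨ba⟩`. If `a ∉ ⟨ba⟩`
it therefore has order `2 · orderOf (ba)`. This holds here because `⟨τ₂τ₁⟩` has odd order 5
and `τ₁ ≠ 1`.
-/

section Lyness

variable {F : Type*} [Field F]

def lyness (x y : F) : ℕ → F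
  | 0 => x
  | 1 => y
  | n + 2 => (lyness x y (n + 1) + 1) / lyness x y n

theorem lyness_lyness (x y : F) (k : ℕ) :
    ∀ n, lyness (lyness x y k) (lyness x y (k + 1)) n = lyness x y (n + k)
  | 0 => by rw [zero_add]; rfl
  | 1 => by rw [add_comm]; rfl
  | n + 2 => by
    rw [lyness, lyness_lyness x y k n, lyness_lyness x y k (n + 1),
      show n + 2 + k = n + k + 2 by omega, lyness, add_right_comm]

structure LynessNondegenerate (x y : F) : Prop where
  x_ne_zero : x ≠ 0
  y_ne_zero : y ≠ 0
  x_add_one_ne_zero : x + 1 ≠ 0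
  y_add_one_ne_zero : y + 1 ≠ 0
  add_add_one_ne_zero : x + y + 1 ≠ 0

theorem lyness_periodic {x y : F} (h : LynessNondegenerate x y) :
    Function.Periodic (lyness x y) 5 := by
  obtain ⟨hx, hy, hx1, hy1, hxy⟩ := h
  have h2 : lyness x y 2 = (y + 1) / x := rfl
  have h3 : lyness x y 3 = (x + y + 1) / (x * y) := by
    simp only [lyness]; field_simp; ring
  have h4 : lyness x y 4 = (x + 1) / y := by
    rw [lyness, h3, h2]; field_simp; ring
  have h5 : lyness x y 5 = x := by
    rw [lyness, h4, h3]; field_simp; ring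
  have h6 : lyness x y 6 = y := by
    rw [lyness, h5, h4]; field_simp
  intro n
  rw [← lyness_lyness, h5, h6]

theorem map_lyness {F' Φ : Type*} [Field F'] [FunLike Φ F F'] [RingHomClass Φ F F'] (φ : Φ)
    (x y : F) : ∀ n, φ (lyness x y n) = lyness (φ x) (φ y) n
  | 0 => rfl
  | 1 => rfl
  | n + 2 => by simp only [lyness, map_div₀, map_add, map_one, map_lyness φ x y n,
      map_lyness φ x y (n + 1)]

variable {R : Type*} [CommSemiring R] [Algebra R F]

theorem pow_apply_lyness_of_shift {x y : F} {σ : F ≃ₐ[R] F} {m : ℕ}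
    (hx : σ x = lyness x y m) (hy : σ y = lyness x y (m + 1)) (k n : ℕ) :
    (σ ^ k) (lyness x y n) = lyness x y (n + k * m) := by
  induction k with
  | zero => simp
  | succ k ih => rw [pow_succ', AlgEquiv.mul_apply, ih, map_lyness, hx, hy, lyness_lyness,
      add_one_mul, add_assoc]

theorem pow_five_apply_lyness {x y : F} (h : LynessNondegenerate x y) {σ : F ≃ₐ[R] F} {m : ℕ}
    (hx : σ x = lyness x y m) (hy : σ y = lyness x y (m + 1)) (n : ℕ) :
    (σ ^ 5) (lyness x y n) = lyness x y n := by
  rw [pow_apply_lyness_of_shift hx hy, mul_comm]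
  exact (lyness_periodic h).nat_mul m n

theorem mul_self_apply_of_apply_eq_add_one_div {u v : F} {τ : F ≃ₐ[R] F}
    (hu : τ u = (v + 1) / u) (hv : τ v = v) (hu0 : u ≠ 0) (hv1 : v + 1 ≠ 0) :
    (τ * τ) u = u := by
  rw [AlgEquiv.mul_apply, hu, map_div₀, map_add, map_one, hu, hv]
  field_simp

theorem mul_apply_eq_lyness {x y : F} (h : LynessNondegenerate x y) {τ₁ τ₂ : F ≃ₐ[R] F}
    (h1x : τ₁ x = (y + 1) / x) (h1y : τ₁ y = y) (h2x : τ₂ x = x) (h2y : τ₂ y = (x + 1) / y) :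
    (τ₂ * τ₁) x = lyness x y 3 ∧ (τ₂ * τ₁) y = lyness x y 4 := by
  obtain ⟨hx, hy, -, hy1, -⟩ := h
  simp only [AlgEquiv.mul_apply, h1x, h1y, map_div₀, map_add, map_one, h2x, h2y, lyness]
  constructor <;> field_simp <;> ring

end Lyness

open Subgroup in
theorem card_closure_pair_of_mul_self_eq_one {G : Type*} [Group G] {a b : G}
    (ha : a * a = 1) (hb : b * b = 1) (hab : a ∉ zpowers (b * a)) :
    Nat.card (closure {a, b}) = 2 * orderOf (b * a) := by
  have hle : zpowers (b * a) ≤ closure {a, b} :=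
    zpowers_le.2 (mul_mem (subset_closure (by simp)) (subset_closure (by simp)))
  have hinv : ∀ s ∈ ({a, b} : Set G), s⁻¹ = s := by
    rintro s (hs | hs) <;> rw [hs]
    exacts [inv_eq_of_mul_eq_one_left ha, inv_eq_of_mul_eq_one_left hb]
  -- Left multiplication by `a` swaps `⟨ba⟩` and `a⟨ba⟩`, and `b = (ba)a`.
  have hstep : ∀ s ∈ ({a, b} : Set G), ∀ g, a * g ∈ zpowers (b * a) ∨ g ∈ zpowers (b * a) →
      a * (s * g) ∈ zpowers (b * a) ∨ s * g ∈ zpowers (b * a) := by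
    rintro s (hs | hs) g hg <;> rw [hs]
    · rwa [← mul_assoc, ha, one_mul, or_comm]
    · refine hg.symm.imp (fun hg ↦ ?_) (fun hg ↦ ?_)
      · have hab_inv : a * b = (b * a)⁻¹ := by
          rw [mul_inv_rev, hinv a (by simp), hinv b (by simp)]
        rw [← mul_assoc, hab_inv]
        exact mul_mem (inv_mem (mem_zpowers _)) hg
      · rw [← one_mul g, ← ha, ← mul_assoc, ← mul_assoc, mul_assoc _ a]
        exact mul_mem (mem_zpowers _) hg
  have hindex : (zpowers (b * a)).relIndex (closure {a, b}) = 2 := by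
    refine relIndex_eq_two_iff_exists_notMem_and'.2 ⟨a, subset_closure (by simp), hab, ?_⟩
    intro g hg
    induction hg using closure_induction_left with
    | one => simp
    | mul_left s hs g _ ih => exact hstep s hs g ih
    | inv_mul_cancel s hs g _ ih => rw [hinv s hs]; exact hstep s hs g ih
  rw [← relIndex_bot_left, ← relIndex_mul_relIndex ⊥ _ _ bot_le hle, relIndex_bot_left,
    Nat.card_zpowers, hindex, mul_comm]

theorem notMem_zpowers_of_odd_orderOf {G : Type*} [Group G] {a g : G}
    (ha : a * a = 1) (ha1 : a ≠ 1) (hg : Odd (orderOf g)) : a ∉ Subgroup.zpowers g := by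
  intro hmem
  have h2 : orderOf a = 2 := orderOf_eq_prime (by rw [sq, ha]) ha1
  have h2dvd := Subgroup.orderOf_dvd_natCard (Subgroup.zpowers g) hmem
  rw [Nat.card_zpowers, h2] at h2dvd
  exact Nat.not_even_iff_odd.2 hg (even_iff_two_dvd.2 h2dvd)

section FractionField

variable {ι R K : Type*} [CommRing R]

theorem algEquiv_ext_of_apply_X [CommRing K] [Algebra (MvPolynomial ι R) K]
    [IsFractionRing (MvPolynomial ι R) K] [Algebra R K] [IsScalarTower R (MvPolynomial ι R) K]
    {φ ψ : K ≃ₐ[R] K}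
    (h : ∀ i, φ (algebraMap (MvPolynomial ι R) K (X i)) =
      ψ (algebraMap (MvPolynomial ι R) K (X i))) :
    φ = ψ := by
  have hpoly : (φ : K →ₐ[R] K).comp (IsScalarTower.toAlgHom R (MvPolynomial ι R) K) =
      (ψ : K →ₐ[R] K).comp (IsScalarTower.toAlgHom R (MvPolynomial ι R) K) :=
    MvPolynomial.algHom_ext h
  have hfrac : (φ : K →+* K) = ψ :=
    IsLocalization.ringHom_ext (nonZeroDivisors _) (congrArg AlgHom.toRingHom hpoly)
  exact AlgEquiv.ext (RingHom.congr_fun hfrac)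

variable [Field K] [Algebra (MvPolynomial ι R) K] [IsFractionRing (MvPolynomial ι R) K]

theorem algebraMap_ne_zero_of_eval_ne_zero {p : MvPolynomial ι R} (v : ι → R)
    (h : eval v p ≠ 0) : algebraMap (MvPolynomial ι R) K p ≠ 0 := by
  rw [Ne, IsFractionRing.to_map_eq_zero_iff]
  rintro rfl
  simp at h

variable [IsDomain R]

theorem add_one_div_algebraMap_X_ne (i j : ι) :
    (algebraMap (MvPolynomial ι R) K (X i) + 1) / algebraMap (MvPolynomial ι R) K (X j) ≠
      algebraMap (MvPolynomial ι R) K (X j) := by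
  rw [Ne, div_eq_iff (algebraMap_ne_zero_of_eval_ne_zero 1 (by simp))]
  intro h
  have hpoly : (X i + 1 : MvPolynomial ι R) = X j * X j :=
    IsFractionRing.injective _ K (by simpa using h)
  simpa using congrArg (eval 0) hpoly

theorem lynessNondegenerate_algebraMap_X (i j : ι) :
    LynessNondegenerate (algebraMap (MvPolynomial ι R) K (X i))
      (algebraMap (MvPolynomial ι R) K (X j)) where
  x_ne_zero := algebraMap_ne_zero_of_eval_ne_zero 1 (by simp)
  y_ne_zero := algebraMap_ne_zero_of_eval_ne_zero 1 (by simp)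
  x_add_one_ne_zero := by
    rw [← map_one (algebraMap (MvPolynomial ι R) K), ← map_add]
    exact algebraMap_ne_zero_of_eval_ne_zero 0 (by simp)
  y_add_one_ne_zero := by
    rw [← map_one (algebraMap (MvPolynomial ι R) K), ← map_add]
    exact algebraMap_ne_zero_of_eval_ne_zero 0 (by simp)
  add_add_one_ne_zero := by
    rw [← map_one (algebraMap (MvPolynomial ι R) K), ← map_add, ← map_add]
    exact algebraMap_ne_zero_of_eval_ne_zero 0 (by simp)

end FractionField

/-- The birational maps `τ₁ : (f,g) ↦ ((g+1)/f, g)` and `τ₂ : (f,g) ↦ (f, (f+1)/g)`,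
viewed as field automorphisms of `ℚ(x,y)` (pullback on coordinate functions), are
involutions, their composition has order 5, and the group they generate is a
dihedral group with 10 elements. -/
theorem pentagon_maps_dihedral_ten
    (x y : FractionRing (MvPolynomial (Fin 2) ℚ))
    (hx : x = algebraMap (MvPolynomial (Fin 2) ℚ) (FractionRing (MvPolynomial (Fin 2) ℚ)) (X 0))
    (hy : y = algebraMap (MvPolynomial (Fin 2) ℚ) (FractionRing (MvPolynomial (Fin 2) ℚ)) (X 1))
    (τ₁ τ₂ : FractionRing (MvPolynomial (Fin 2) ℚ) ≃ₐ[ℚ] FractionRing (MvPolynomial (Fin 2) ℚ))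
    (h1x : τ₁ x = (y + 1) / x) (h1y : τ₁ y = y)
    (h2x : τ₂ x = x) (h2y : τ₂ y = (x + 1) / y) :
    τ₁ * τ₁ = 1 ∧ τ₂ * τ₂ = 1 ∧ orderOf (τ₂ * τ₁) = 5 ∧
      Nat.card (Subgroup.closure ({τ₁, τ₂} :
        Set (FractionRing (MvPolynomial (Fin 2) ℚ) ≃ₐ[ℚ]
          FractionRing (MvPolynomial (Fin 2) ℚ)))) = 10 := by
  have hgen : LynessNondegenerate x y := hx ▸ hy ▸ lynessNondegenerate_algebraMap_X 0 1
  have hext : ∀ φ ψ : FractionRing (MvPolynomial (Fin 2) ℚ) ≃ₐ[ℚ]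
      FractionRing (MvPolynomial (Fin 2) ℚ), φ x = ψ x → φ y = ψ y → φ = ψ := by
    intro φ ψ h0 h1
    apply algEquiv_ext_of_apply_X (ι := Fin 2)
    rw [Fin.forall_fin_two, ← hx, ← hy]
    exact ⟨h0, h1⟩
  have hτ₁ : τ₁ * τ₁ = 1 := hext _ _
    (mul_self_apply_of_apply_eq_add_one_div h1x h1y hgen.x_ne_zero hgen.y_add_one_ne_zero)
    (by simp [h1y])
  have hτ₂ : τ₂ * τ₂ = 1 := hext _ _ (by simp [h2x])
    (mul_self_apply_of_apply_eq_add_one_div h2y h2x hgen.y_ne_zero hgen.x_add_one_ne_zero)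
  obtain ⟨hσx, hσy⟩ := mul_apply_eq_lyness hgen h1x h1y h2x h2y
  have hσ5 : (τ₂ * τ₁) ^ 5 = 1 :=
    hext _ _ (pow_five_apply_lyness hgen hσx hσy 0) (pow_five_apply_lyness hgen hσx hσy 1)
  have hσ1 : τ₂ * τ₁ ≠ 1 := fun h ↦ add_one_div_algebraMap_X_ne (ι := Fin 2) (R := ℚ) 0 1 <| by
    have hfix := AlgEquiv.ext_iff.1 h y
    rwa [AlgEquiv.mul_apply, h1y, h2y, AlgEquiv.one_apply, hx, hy] at hfix
  have hτ₁1 : τ₁ ≠ 1 := fun h ↦ add_one_div_algebraMap_X_ne (ι := Fin 2) (R := ℚ) 1 0 <| by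
    rw [← hx, ← hy, ← h1x, h, AlgEquiv.one_apply]
  have horder : orderOf (τ₂ * τ₁) = 5 := orderOf_eq_prime (hp := ⟨Nat.prime_five⟩) hσ5 hσ1
  refine ⟨hτ₁, hτ₂, horder, ?_⟩
  rw [card_closure_pair_of_mul_self_eq_one hτ₁ hτ₂
    (notMem_zpowers_of_odd_orderOf hτ₁ hτ₁1 (by rw [horder]; decide)), horder]
end

section
/- The number of noncrossing partitions of the set {1,…,n+1} equals the Catalan number (1/(n+2))·binom(2n+2, n+1). -/
open Finset

/-- A partition of a finite linearly ordered set is noncrossing if there is no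
quadruple `a < b < c < d` with `a, c` in one block and `b, d` in a different block. -/
def Finpartition.IsNoncrossing {n : ℕ}
    (P : Finpartition (Finset.univ : Finset (Fin n))) : Prop :=
  ¬∃ a b c d : Fin n, a < b ∧ b < c ∧ c < d ∧
    ∃ B ∈ P.parts, ∃ B' ∈ P.parts, B ≠ B' ∧ a ∈ B ∧ c ∈ B ∧ b ∈ B' ∧ d ∈ B'

namespace NC

variable {α : Type*} [Fintype α] [DecidableEq α]

/-- The relation induced by a finpartition of `univ`. -/
def Rel (P : Finpartition (univ : Finset α)) (x y : α) : Prop := y ∈ P.part x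

lemma rel_refl (P : Finpartition (univ : Finset α)) (x : α) : Rel P x x :=
  P.mem_part (mem_univ x)

lemma rel_iff_part_eq {P : Finpartition (univ : Finset α)} {x y : α} :
    Rel P x y ↔ P.part x = P.part y :=
  (P.mem_part_iff_part_eq_part (mem_univ y) (mem_univ x)).trans eq_comm

lemma rel_symm {P : Finpartition (univ : Finset α)} {x y : α} (h : Rel P x y) : Rel P y x := by
  rw [rel_iff_part_eq] at *
  exact h.symm

lemma rel_trans {P : Finpartition (univ : Finset α)} {x y z : α}
    (h1 : Rel P x y) (h2 : Rel P y z) : Rel P x z := by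
  rw [rel_iff_part_eq] at *
  exact h1.trans h2

lemma eq_of_rel_iff {P P' : Finpartition (univ : Finset α)}
    (h : ∀ x y, Rel P x y ↔ Rel P' x y) : P = P' := by
  have hp : ∀ x, P.part x = P'.part x := fun x => Finset.ext fun y => h x y
  ext B
  constructor
  · intro hB
    obtain ⟨x, hx⟩ := P.nonempty_of_mem_parts hB
    have := P.part_eq_of_mem hB hx
    rw [hp] at this
    rw [← this]
    exact P'.part_mem.2 (mem_univ x)
  · intro hB
    obtain ⟨x, hx⟩ := P'.nonempty_of_mem_parts hB
    have := P'.part_eq_of_mem hB hx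
    rw [← hp] at this
    rw [← this]
    exact P.part_mem.2 (mem_univ x)

/-- Build a finpartition from the kernel of a function. -/
def ofKer {β : Type*} [DecidableEq β] (f : α → β) : Finpartition (univ : Finset α) :=
  @Finpartition.ofSetoid _ _ _ (Setoid.ker f)
    (fun x y => inferInstanceAs (Decidable (f x = f y)))

lemma rel_ofKer {β : Type*} [DecidableEq β] (f : α → β) (x y : α) :
    Rel (ofKer f) x y ↔ f x = f y :=
  @Finpartition.mem_part_ofSetoid_iff_rel _ _ _ _ (Setoid.ker f)
    (fun x y => inferInstanceAs (Decidable (f x = f y))) _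

lemma isNoncrossing_iff {n : ℕ} (P : Finpartition (univ : Finset (Fin n))) :
    P.IsNoncrossing ↔
      ¬∃ a b c d : Fin n, a < b ∧ b < c ∧ c < d ∧ Rel P a c ∧ Rel P b d ∧ ¬Rel P a b := by
  unfold Finpartition.IsNoncrossing
  constructor
  · rintro h ⟨a, b, c, d, h1, h2, h3, hac, hbd, hnab⟩
    refine h ⟨a, b, c, d, h1, h2, h3, P.part a, P.part_mem.2 (mem_univ a), P.part b,
      P.part_mem.2 (mem_univ b), ?_, P.mem_part (mem_univ a), hac, P.mem_part (mem_univ b), hbd⟩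
    intro he
    exact hnab (show b ∈ P.part a from he ▸ P.mem_part (mem_univ b))
  · rintro h ⟨a, b, c, d, h1, h2, h3, B, hB, B', hB', hne, haB, hcB, hbB', hdB'⟩
    refine h ⟨a, b, c, d, h1, h2, h3, ?_, ?_, ?_⟩
    · show c ∈ P.part a
      rw [P.part_eq_of_mem hB haB]; exact hcB
    · show d ∈ P.part b
      rw [P.part_eq_of_mem hB' hbB']; exact hdB'
    · intro hab
      have : b ∈ B := by rw [← P.part_eq_of_mem hB haB]; exact hab
      exact hne (P.eq_of_mem_parts hB hB' this hbB')

variable {m N : ℕ}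

/-- Restrict a partition along an (order-)embedding. -/
def restrict (e : Fin m → Fin N) (P : Finpartition (univ : Finset (Fin N))) :
    Finpartition (univ : Finset (Fin m)) :=
  ofKer (fun x => P.part (e x))

lemma rel_restrict (e : Fin m → Fin N) (P : Finpartition (univ : Finset (Fin N))) (x y : Fin m) :
    Rel (restrict e P) x y ↔ Rel P (e x) (e y) := by
  rw [restrict, rel_ofKer, rel_iff_part_eq]

lemma restrict_noncrossing {e : Fin m → Fin N} (he : StrictMono e)
    {P : Finpartition (univ : Finset (Fin N))} (hP : P.IsNoncrossing) :
    (restrict e P).IsNoncrossing := by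
  rw [isNoncrossing_iff] at *
  rintro ⟨a, b, c, d, h1, h2, h3, hac, hbd, hnab⟩
  rw [rel_restrict] at hac hbd hnab
  exact hP ⟨e a, e b, e c, e d, he h1, he h2, he h3, hac, hbd, hnab⟩

end NC

namespace NC

lemma image_val_inj {k : ℕ} {s t : Finset (Fin k)} :
    s.image Fin.val = t.image Fin.val ↔ s = t :=
  ⟨fun h => Finset.image_injective Fin.val_injective h, fun h => congrArg _ h⟩

variable {n i : ℕ} (hi : i ≤ n) (Q : Finpartition (univ : Finset (Fin i)))
  (R : Finpartition (univ : Finset (Fin (n - i))))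

/-- The "marker" function for the glued partition. -/
def glueD (x : Fin (n + 1)) : Finset ℕ ⊕ Finset ℕ :=
  if hx : x.val < i then .inl ((Q.part ⟨x.val, hx⟩).image Fin.val)
  else if hx' : x.val < n then .inr ((R.part ⟨x.val - i, by omega⟩).image Fin.val)
  else if h0 : 0 < i then .inl ((Q.part ⟨i - 1, by omega⟩).image Fin.val)
  else .inl ∅

/-- Glue partitions of `[0,i)` and `[i,n)` into one of `[0,n]`, adding `n` to the
block of `i-1` (or as a singleton if `i = 0`). -/
def glue : Finpartition (univ : Finset (Fin (n + 1))) := ofKer (glueD hi Q R)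

lemma rel_glue (x y : Fin (n + 1)) :
    Rel (glue hi Q R) x y ↔ glueD hi Q R x = glueD hi Q R y :=
  rel_ofKer _ _ _

lemma glueD_L (x : Fin (n + 1)) (hx : x.val < i) :
    glueD hi Q R x = .inl ((Q.part ⟨x.val, hx⟩).image Fin.val) := dif_pos hx

lemma glueD_M (x : Fin (n + 1)) (hx : ¬x.val < i) (hx' : x.val < n) :
    glueD hi Q R x = .inr ((R.part ⟨x.val - i, by omega⟩).image Fin.val) := by
  rw [glueD, dif_neg hx, dif_pos hx']

lemma glueD_T_pos (h0 : 0 < i) :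
    glueD hi Q R (Fin.last n) = .inl ((Q.part ⟨i - 1, by omega⟩).image Fin.val) := by
  rw [glueD, dif_neg (by simp [Fin.last]; omega), dif_neg (by simp [Fin.last]), dif_pos h0]

lemma glueD_T_zero (h0 : i = 0) : glueD hi Q R (Fin.last n) = .inl ∅ := by
  rw [glueD, dif_neg (by simp [Fin.last]; omega), dif_neg (by simp [Fin.last]),
    dif_neg (by omega)]

lemma rel_glue_LL (x y : Fin (n + 1)) (hx : x.val < i) (hy : y.val < i) :
    Rel (glue hi Q R) x y ↔ Rel Q ⟨x.val, hx⟩ ⟨y.val, hy⟩ := by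
  rw [rel_glue, glueD_L hi Q R x hx, glueD_L hi Q R y hy, rel_iff_part_eq]
  simp [image_val_inj]

lemma rel_glue_MM (x y : Fin (n + 1)) (hx : ¬x.val < i) (hx' : x.val < n)
    (hy : ¬y.val < i) (hy' : y.val < n) :
    Rel (glue hi Q R) x y ↔ Rel R ⟨x.val - i, by omega⟩ ⟨y.val - i, by omega⟩ := by
  rw [rel_glue, glueD_M hi Q R x hx hx', glueD_M hi Q R y hy hy', rel_iff_part_eq]
  simp [image_val_inj]

lemma rel_glue_LM (x y : Fin (n + 1)) (hx : x.val < i) (hy : ¬y.val < i) (hy' : y.val < n) :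
    ¬Rel (glue hi Q R) x y := by
  rw [rel_glue, glueD_L hi Q R x hx, glueD_M hi Q R y hy hy']
  simp

lemma rel_glue_LT (x : Fin (n + 1)) (hx : x.val < i) :
    Rel (glue hi Q R) x (Fin.last n) ↔ Rel Q ⟨x.val, hx⟩ ⟨i - 1, by omega⟩ := by
  rw [rel_glue, glueD_L hi Q R x hx, glueD_T_pos hi Q R (by omega), rel_iff_part_eq]
  simp [image_val_inj]

lemma rel_glue_MT (x : Fin (n + 1)) (hx : ¬x.val < i) (hx' : x.val < n) :
    ¬Rel (glue hi Q R) x (Fin.last n) := by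
  rw [rel_glue, glueD_M hi Q R x hx hx']
  by_cases h0 : 0 < i
  · rw [glueD_T_pos hi Q R h0]; simp
  · rw [glueD_T_zero hi Q R (by omega)]; simp

lemma glue_noncrossing (hQ : Q.IsNoncrossing) (hR : R.IsNoncrossing) :
    (glue hi Q R).IsNoncrossing := by
  rw [isNoncrossing_iff]
  rw [isNoncrossing_iff] at hQ hR
  rintro ⟨a, b, c, d, h1, h2, h3, hac, hbd, hnab⟩
  rw [Fin.lt_def] at h1 h2 h3
  have hdn : d.val ≤ n := by omega
  have hcn : c.val < n := by omega
  by_cases hci : c.val < i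
  · have hai : a.val < i := by omega
    have hbi : b.val < i := by omega
    have hac' := (rel_glue_LL hi Q R a c hai hci).1 hac
    have hnab' := fun h => hnab ((rel_glue_LL hi Q R a b hai hbi).2 h)
    by_cases hdi : d.val < i
    · have hbd' := (rel_glue_LL hi Q R b d hbi hdi).1 hbd
      exact hQ ⟨⟨a.val, hai⟩, ⟨b.val, hbi⟩, ⟨c.val, hci⟩, ⟨d.val, hdi⟩,
        Fin.mk_lt_mk.mpr h1, Fin.mk_lt_mk.mpr h2, Fin.mk_lt_mk.mpr h3, hac', hbd', hnab'⟩
    · by_cases hdn' : d.val < n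
      · exact rel_glue_LM hi Q R b d hbi hdi hdn' hbd
      · have hd : d = Fin.last n := Fin.ext (by simp [Fin.last]; omega)
        rw [hd] at hbd
        have hbd' := (rel_glue_LT hi Q R b hbi).1 hbd
        rcases Nat.lt_or_ge c.val (i - 1) with h | h
        · exact hQ ⟨⟨a.val, hai⟩, ⟨b.val, hbi⟩, ⟨c.val, hci⟩, ⟨i - 1, by omega⟩,
            Fin.mk_lt_mk.mpr h1, Fin.mk_lt_mk.mpr h2, Fin.mk_lt_mk.mpr h, hac', hbd', hnab'⟩
        · have hceq : (⟨i - 1, by omega⟩ : Fin i) = ⟨c.val, hci⟩ := Fin.ext (by simp; omega)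
          rw [hceq] at hbd'
          exact hnab' (rel_trans hac' (rel_symm hbd'))
  · have hcm : ¬ c.val < i := hci
    by_cases hai : a.val < i
    · exact rel_glue_LM hi Q R a c hai hci hcn hac
    · have hbm : ¬ b.val < i := by omega
      have hbn : b.val < n := by omega
      have han : a.val < n := by omega
      by_cases hdn' : d.val < n
      · have hac' := (rel_glue_MM hi Q R a c hai han hci hcn).1 hac
        have hbd' := (rel_glue_MM hi Q R b d hbm hbn (by omega) hdn').1 hbd
        have hnab' := fun h => hnab ((rel_glue_MM hi Q R a b hai han hbm hbn).2 h)
        exact hR ⟨⟨a.val - i, by omega⟩, ⟨b.val - i, by omega⟩, ⟨c.val - i, by omega⟩,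
          ⟨d.val - i, by omega⟩, Fin.mk_lt_mk.mpr (by omega), Fin.mk_lt_mk.mpr (by omega),
          Fin.mk_lt_mk.mpr (by omega), hac', hbd', hnab'⟩
      · have hd : d = Fin.last n := Fin.ext (by simp [Fin.last]; omega)
        rw [hd] at hbd
        exact rel_glue_MT hi Q R b hbm hbn hbd

end NC

namespace NC

variable {n : ℕ} (P : Finpartition (univ : Finset (Fin (n + 1))))

/-- The index `i`: one plus the largest non-maximal element of the block of the
maximum, or `0` if the maximum is alone in its block. -/
def idx : ℕ := ((P.part (Fin.last n)).erase (Fin.last n)).sup (fun x => x.val + 1)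

lemma idx_le : idx P ≤ n := by
  refine Finset.sup_le fun x hx => ?_
  have hne := (Finset.mem_erase.1 hx).1
  have : x.val ≠ n := fun h => hne (Fin.ext (by simpa [Fin.last] using h))
  have := x.isLt
  omega

lemma lt_idx_of_mem {x : Fin (n + 1)} (hx : x ∈ P.part (Fin.last n)) (hne : x ≠ Fin.last n) :
    x.val < idx P :=
  Finset.le_sup (f := fun x : Fin (n+1) => x.val + 1) (Finset.mem_erase.2 ⟨hne, hx⟩)

lemma mem_of_idx_pos (h0 : 0 < idx P) :
    (⟨idx P - 1, by have := idx_le P; omega⟩ : Fin (n + 1)) ∈ P.part (Fin.last n) := by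
  have hne : ((P.part (Fin.last n)).erase (Fin.last n)).Nonempty := by
    by_contra h
    rw [Finset.not_nonempty_iff_eq_empty] at h
    rw [idx, h] at h0
    simp at h0
  obtain ⟨y, hy, hsup⟩ := Finset.exists_mem_eq_sup _ hne (fun x : Fin (n+1) => x.val + 1)
  have hidx : idx P = y.val + 1 := hsup
  have : (⟨idx P - 1, by have := idx_le P; omega⟩ : Fin (n + 1)) = y := Fin.ext (by simp [hidx])
  rw [this]
  exact (Finset.mem_erase.1 hy).2

lemma rel_lt_idx (hP : P.IsNoncrossing) {x y : Fin (n + 1)} (hxy : Rel P x y)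
    (hx : x.val < idx P) (hy : y.val < n) : y.val < idx P := by
  by_cases hT : P.part x = P.part (Fin.last n)
  · refine lt_idx_of_mem P ?_ (fun h => by simp [h, Fin.last] at hy)
    rw [← hT]
    exact hxy
  · by_contra hge
    have h0 : 0 < idx P := by omega
    set m : Fin (n + 1) := ⟨idx P - 1, by have := idx_le P; omega⟩ with hm
    have hmT : m ∈ P.part (Fin.last n) := mem_of_idx_pos P h0
    have hxnT : x ∉ P.part (Fin.last n) := fun hc =>
      hT (P.part_eq_of_mem (P.part_mem.2 (mem_univ (Fin.last n))) hc)
    have hxm : x.val < idx P - 1 := by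
      rcases Nat.lt_or_ge x.val (idx P - 1) with h | h
      · exact h
      · exfalso
        have : x = m := Fin.ext (by simp [hm]; omega)
        exact hxnT (this ▸ hmT)
    rw [isNoncrossing_iff] at hP
    refine hP ⟨x, m, y, Fin.last n, Fin.lt_def.2 (by simp [hm]; omega),
      Fin.lt_def.2 (by simp [hm]; omega), Fin.lt_def.2 (by simp [Fin.last]; omega),
      hxy, ?_, ?_⟩
    · show Fin.last n ∈ P.part m
      rw [P.part_eq_of_mem (P.part_mem.2 (mem_univ (Fin.last n))) hmT]
      exact P.mem_part (mem_univ _)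
    · intro hc
      exact hT ((P.part_eq_of_mem (P.part_mem.2 (mem_univ x)) hc).symm.trans
        (P.part_eq_of_mem (P.part_mem.2 (mem_univ (Fin.last n))) hmT))

end NC

namespace NC

variable {n : ℕ}

def eL (i : ℕ) (hi : i ≤ n) : Fin i → Fin (n + 1) := fun x => ⟨x.val, by omega⟩

def eR (i : ℕ) (hi : i ≤ n) : Fin (n - i) → Fin (n + 1) := fun x => ⟨x.val + i, by omega⟩

lemma eL_strictMono {i : ℕ} (hi : i ≤ n) : StrictMono (eL i hi) := fun _ _ h =>
  Fin.mk_lt_mk.mpr (Fin.lt_def.1 h)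

lemma eR_strictMono {i : ℕ} (hi : i ≤ n) : StrictMono (eR i hi) := fun a b h =>
  Fin.mk_lt_mk.mpr (by have := Fin.lt_def.1 h; omega)

theorem glue_restrict (P : Finpartition (univ : Finset (Fin (n + 1)))) (hP : P.IsNoncrossing) :
    glue (idx_le P) (restrict (eL (idx P) (idx_le P)) P) (restrict (eR (idx P) (idx_le P)) P)
      = P := by
  apply eq_of_rel_iff
  have aux : ∀ x y : Fin (n + 1), x.val ≤ y.val →
      (Rel (glue (idx_le P) (restrict (eL (idx P) (idx_le P)) P)
        (restrict (eR (idx P) (idx_le P)) P)) x y ↔ Rel P x y) := by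
    intro x y hxy
    by_cases hyi : y.val < idx P
    · have hxi : x.val < idx P := lt_of_le_of_lt hxy hyi
      rw [rel_glue_LL _ _ _ x y hxi hyi, rel_restrict]
      have e1 : eL (idx P) (idx_le P) ⟨x.val, hxi⟩ = x := Fin.ext rfl
      have e2 : eL (idx P) (idx_le P) ⟨y.val, hyi⟩ = y := Fin.ext rfl
      rw [e1, e2]
    · by_cases hyn : y.val < n
      · by_cases hxi : x.val < idx P
        · constructor
          · intro h; exact absurd h (rel_glue_LM _ _ _ x y hxi hyi hyn)
          · intro h; exact absurd (rel_lt_idx P hP h hxi hyn) hyi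
        · have hxn : x.val < n := by omega
          rw [rel_glue_MM _ _ _ x y hxi hxn hyi hyn, rel_restrict]
          have e1 : eR (idx P) (idx_le P) ⟨x.val - idx P, by omega⟩ = x :=
            Fin.ext (by simp [eR]; omega)
          have e2 : eR (idx P) (idx_le P) ⟨y.val - idx P, by omega⟩ = y :=
            Fin.ext (by simp [eR]; omega)
          rw [e1, e2]
      · have hy : y = Fin.last n := Fin.ext (by simp [Fin.last]; omega)
        subst hy
        by_cases hxi : x.val < idx P
        · rw [rel_glue_LT _ _ _ x hxi, rel_restrict]
          have h0 : 0 < idx P := by omega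
          have e1 : eL (idx P) (idx_le P) ⟨x.val, hxi⟩ = x := Fin.ext rfl
          have e2 : eL (idx P) (idx_le P) ⟨idx P - 1, by omega⟩ =
              (⟨idx P - 1, by have := idx_le P; omega⟩ : Fin (n + 1)) := Fin.ext rfl
          rw [e1, e2]
          have hpm : P.part (⟨idx P - 1, by have := idx_le P; omega⟩ : Fin (n + 1))
              = P.part (Fin.last n) :=
            P.part_eq_of_mem (P.part_mem.2 (mem_univ (Fin.last n))) (mem_of_idx_pos P h0)
          rw [rel_iff_part_eq, rel_iff_part_eq, hpm]
        · by_cases hxn : x.val < n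
          · constructor
            · intro h; exact absurd h (rel_glue_MT _ _ _ x hxi hxn)
            · intro h
              have hpx : P.part x = P.part (Fin.last n) := rel_iff_part_eq.1 h
              have hmem : x ∈ P.part (Fin.last n) := hpx ▸ P.mem_part (mem_univ x)
              have := lt_idx_of_mem P hmem (fun hc => by simp [hc, Fin.last] at hxn)
              omega
          · have hx : x = Fin.last n := Fin.ext (by simp [Fin.last]; omega)
            subst hx
            exact ⟨fun _ => rel_refl _ _, fun _ => rel_refl _ _⟩
  intro x y
  rcases le_total x.val y.val with h | h
  · exact aux x y h
  · exact ⟨fun h' => rel_symm ((aux y x h).1 (rel_symm h')),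
      fun h' => rel_symm ((aux y x h).2 (rel_symm h'))⟩

end NC

namespace NC

variable {n i : ℕ} (hi : i ≤ n) (Q : Finpartition (univ : Finset (Fin i)))
  (R : Finpartition (univ : Finset (Fin (n - i))))

lemma idx_glue : idx (glue hi Q R) = i := by
  apply le_antisymm
  · refine Finset.sup_le fun y hy => ?_
    obtain ⟨hne, hmem⟩ := Finset.mem_erase.1 hy
    have hrel : Rel (glue hi Q R) y (Fin.last n) := rel_symm hmem
    have hyn : y.val < n := by
      have := y.isLt
      rcases Nat.lt_or_ge y.val n with h | h
      · exact h
      · exact absurd (Fin.ext (by simp [Fin.last]; omega) : y = Fin.last n) hne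
    by_cases hyi : y.val < i
    · omega
    · exact absurd hrel (rel_glue_MT hi Q R y hyi hyn)
  · rcases Nat.eq_zero_or_pos i with h0 | h0
    · omega
    · have hrel : Rel (glue hi Q R) (⟨i - 1, by omega⟩ : Fin (n + 1)) (Fin.last n) := by
        rw [rel_glue_LT hi Q R _ (by simp; omega)]
        exact rel_refl _ _
      have hmem : (⟨i - 1, by omega⟩ : Fin (n + 1))
          ∈ (glue hi Q R).part (Fin.last n) := rel_symm hrel
      have hne : (⟨i - 1, by omega⟩ : Fin (n + 1)) ≠ Fin.last n := by
        intro hc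
        have h2 : i - 1 = n := by simpa [Fin.last] using congrArg Fin.val hc
        omega
      have := Finset.le_sup (f := fun x : Fin (n+1) => x.val + 1)
        (Finset.mem_erase.2 ⟨hne, hmem⟩)
      simp only at this
      rw [idx]
      omega

lemma restrict_glue_L : restrict (eL i hi) (glue hi Q R) = Q := by
  apply eq_of_rel_iff
  intro x y
  rw [rel_restrict, rel_glue_LL hi Q R _ _ (show (eL i hi x).val < i from x.isLt)
    (show (eL i hi y).val < i from y.isLt)]
  have e1 : (⟨(eL i hi x).val, x.isLt⟩ : Fin i) = x := Fin.ext rfl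
  have e2 : (⟨(eL i hi y).val, y.isLt⟩ : Fin i) = y := Fin.ext rfl
  rw [e1, e2]

lemma restrict_glue_R : restrict (eR i hi) (glue hi Q R) = R := by
  apply eq_of_rel_iff
  intro x y
  have hx : ¬(eR i hi x).val < i := by simp [eR]
  have hx' : (eR i hi x).val < n := by have := x.isLt; simp [eR]; omega
  have hy : ¬(eR i hi y).val < i := by simp [eR]
  have hy' : (eR i hi y).val < n := by have := y.isLt; simp [eR]; omega
  rw [rel_restrict, rel_glue_MM hi Q R _ _ hx hx' hy hy']
  have e1 : (⟨(eR i hi x).val - i, by omega⟩ : Fin (n - i)) = x := Fin.ext (by simp [eR])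
  have e2 : (⟨(eR i hi y).val - i, by omega⟩ : Fin (n - i)) = y := Fin.ext (by simp [eR])
  rw [e1, e2]

end NC

namespace NC

/-- Noncrossing partitions of `Fin m`. -/
abbrev NCP (m : ℕ) := {P : Finpartition (univ : Finset (Fin m)) // P.IsNoncrossing}

instance finpartitionFinite (m : ℕ) : Finite (Finpartition (univ : Finset (Fin m))) :=
  Finite.of_injective Finpartition.parts fun P P' h => by
    ext B
    rw [h]

variable {n : ℕ}

/-- The gluing map realizing the Catalan recurrence. -/
def gMap (x : Σ i : Fin (n + 1), NCP i.val × NCP (n - i.val)) : NCP (n + 1) :=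
  ⟨glue (Nat.lt_succ_iff.mp x.1.isLt) x.2.1.1 x.2.2.1,
    glue_noncrossing _ _ _ x.2.1.2 x.2.2.2⟩

lemma gMap_bijective : Function.Bijective (gMap (n := n)) := by
  constructor
  · rintro ⟨⟨iv, hv⟩, ⟨Q, hQ⟩, ⟨R, hR⟩⟩ ⟨⟨iv', hv'⟩, ⟨Q', hQ'⟩, ⟨R', hR'⟩⟩ heq
    have heq' : glue (Nat.lt_succ_iff.mp (Fin.isLt ⟨iv, hv⟩)) Q R
        = glue (Nat.lt_succ_iff.mp (Fin.isLt ⟨iv', hv'⟩)) Q' R' := congrArg Subtype.val heq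
    have hii : iv = iv' := by
      have t1 := idx_glue (Nat.lt_succ_iff.mp (Fin.isLt ⟨iv, hv⟩)) Q R
      have t2 := idx_glue (Nat.lt_succ_iff.mp (Fin.isLt ⟨iv', hv'⟩)) Q' R'
      rw [heq'] at t1
      exact t1.symm.trans t2
    subst hii
    have hQQ : Q = Q' := by
      rw [← restrict_glue_L (Nat.lt_succ_iff.mp (Fin.isLt ⟨iv, hv⟩)) Q R, heq',
        restrict_glue_L]
    have hRR : R = R' := by
      rw [← restrict_glue_R (Nat.lt_succ_iff.mp (Fin.isLt ⟨iv, hv⟩)) Q R, heq',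
        restrict_glue_R]
    subst hQQ
    subst hRR
    rfl
  · rintro ⟨P, hP⟩
    refine ⟨⟨⟨idx P, Nat.lt_succ_of_le (idx_le P)⟩,
      ⟨restrict (eL (idx P) (idx_le P)) P, restrict_noncrossing (eL_strictMono _) hP⟩,
      ⟨restrict (eR (idx P) (idx_le P)) P, restrict_noncrossing (eR_strictMono _) hP⟩⟩, ?_⟩
    exact Subtype.ext (glue_restrict P hP)

lemma card_step (n : ℕ) :
    Nat.card (NCP (n + 1)) = ∑ i : Fin (n + 1), Nat.card (NCP i.val) * Nat.card (NCP (n - i.val)) := by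
  rw [← Nat.card_eq_of_bijective _ (gMap_bijective (n := n))]
  letI : ∀ m, Fintype (NCP m) := fun m => Fintype.ofFinite _
  rw [Nat.card_eq_fintype_card, Fintype.card_sigma]
  refine Finset.sum_congr rfl fun i _ => ?_
  rw [Fintype.card_prod, Nat.card_eq_fintype_card, Nat.card_eq_fintype_card]

lemma card_zero : Nat.card (NCP 0) = 1 := by
  haveI hs : Subsingleton (Finpartition (univ : Finset (Fin 0))) :=
    ⟨fun P P' => eq_of_rel_iff (fun x _ => x.elim0)⟩
  rw [Nat.card_eq_one_iff_unique]
  refine ⟨⟨fun a b => Subtype.ext (Subsingleton.elim _ _)⟩, ⟨⟨⊥, ?_⟩⟩⟩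
  rintro ⟨a, -⟩
  exact a.elim0

lemma card_eq_catalan : ∀ m, Nat.card (NCP m) = catalan m := by
  intro m
  induction m using Nat.strong_induction_on with
  | _ m ih =>
    match m with
    | 0 => simpa using card_zero
    | (k + 1) =>
      rw [card_step k, catalan_succ]
      refine Finset.sum_congr rfl fun i _ => ?_
      have hik := i.isLt
      rw [ih i.val (by omega), ih (k - i.val) (by omega)]

end NC

/-- The number of noncrossing partitions of `{1,…,n+1}` equals the Catalan number
`(1/(n+2))·binom(2n+2, n+1)`. -/
theorem card_noncrossing_partitions_eq_catalan (n : ℕ) :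
    Nat.card {P : Finpartition (Finset.univ : Finset (Fin (n + 1))) //
        P.IsNoncrossing} * (n + 2) = Nat.choose (2 * n + 2) (n + 1) := by
  show Nat.card (NC.NCP (n + 1)) * (n + 2) = _
  calc Nat.card (NC.NCP (n + 1)) * (n + 2) = (n + 2) * catalan (n + 1) := by
        rw [NC.card_eq_catalan]; ring
    _ = Nat.centralBinom (n + 1) := succ_mul_catalan_eq_centralBinom (n + 1)
    _ = Nat.choose (2 * n + 2) (n + 1) := by
        rw [Nat.centralBinom, show 2 * (n + 1) = 2 * n + 2 from by ring]
end
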